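/- For all natural numbers α ≥ 2, ω₂(exp((ω₁(α))²)) ≤ exp²(4·(log α)⁴)^C + C for an absolute constant C; in particular if exp²(α) exists (α ∈ log²) then ω₂ of the code bound exp((ω₁(α))²) exists, since 4(log α)⁴ ≤ α for large α. -/

import Mathlib

/-- exp(x) = 2^x. -/
def exp2 (x : ℕ) : ℕ := 2 ^ x

/-- n-fold iteration of exp. -/
def expIter (n x : ℕ) : ℕ := exp2^[n] x

/-- base-2 logarithm (exact on powers of two). -/
def log2 (x : ℕ) : ℕ := Nat.log 2 x

/-- n-fold iteration of log. -/
def logIter (n x : ℕ) : ℕ := log2^[n] x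

/-- ω₁(x) = exp((log x)·(log x)). -/
def omega1 (x : ℕ) : ℕ := exp2 (log2 x * log2 x)

/-- ω₂(x) = exp²((log² x)·(log² x)). -/
def omega2 (x : ℕ) : ℕ := expIter 2 (logIter 2 x * logIter 2 x)

/-!
The bound holds with `C = 1`, in fact with equality before adding `C`: since
`ω₁(α)² = exp(2 (log α)²)`, the code `exp(ω₁(α)²)` is `exp²(2 (log α)²)`, whose double
logarithm is exactly `2 (log α)²`, so `ω₂` of it is `exp²(4 (log α)⁴)`.
The second claim is `4 k⁴ ≤ 2ᵏ` for `k ≥ 20`, applied to `k = log α ≤ α`.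
-/

theorem log2_exp2 (x : ℕ) : log2 (exp2 x) = x :=
  Nat.log_pow one_lt_two x

theorem logIter_expIter (n x : ℕ) : logIter n (expIter n x) = x := by
  induction n with
  | zero => rfl
  | succ n ih =>
    rw [logIter, expIter, Function.iterate_succ_apply, Function.iterate_succ_apply', log2_exp2]
    exact ih

theorem omega2_expIter_two (y : ℕ) : omega2 (expIter 2 y) = expIter 2 (y * y) := by
  rw [omega2, logIter_expIter]

theorem omega1_mul_self (x : ℕ) : omega1 x * omega1 x = exp2 (2 * log2 x ^ 2) := by
  simp only [omega1, exp2, ← pow_add]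
  ring_nf

theorem omega2_exp2_omega1_mul_self (x : ℕ) :
    omega2 (exp2 (omega1 x * omega1 x)) = expIter 2 (4 * log2 x ^ 4) := by
  have hcode : exp2 (omega1 x * omega1 x) = expIter 2 (2 * log2 x ^ 2) := by
    rw [omega1_mul_self]
    rfl
  rw [hcode, omega2_expIter_two]
  ring_nf

theorem four_mul_pow_four_le_two_pow {k : ℕ} (hk : 20 ≤ k) : 4 * k ^ 4 ≤ 2 ^ k := by
  induction k, hk using Nat.le_induction with
  | base => norm_num
  | succ n hn ih =>
    have hstep : 4 * (n + 1) ^ 4 ≤ 2 * (4 * n ^ 4) := by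
      have : 20 * n ^ 3 ≤ n * n ^ 3 := Nat.mul_le_mul_right _ hn
      nlinarith
    calc 4 * (n + 1) ^ 4 ≤ 2 * (4 * n ^ 4) := hstep
      _ ≤ 2 * 2 ^ n := by omega
      _ = 2 ^ (n + 1) := by ring

theorem four_mul_log2_pow_four_le {α : ℕ} (hα : 2 ^ 20 ≤ α) : 4 * log2 α ^ 4 ≤ α := by
  have hα0 : α ≠ 0 := by positivity
  have hlog : 20 ≤ log2 α := (Nat.le_log_iff_pow_le one_lt_two hα0).mpr hα
  calc 4 * log2 α ^ 4 ≤ 2 ^ log2 α := four_mul_pow_four_le_two_pow hlog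
    _ ≤ α := Nat.pow_log_le_self 2 hα0

/-- there is an absolute constant C such that for all α ≥ 2,
ω₂(exp((ω₁(α))²)) ≤ exp²(4·(log α)⁴)^C + C; moreover 4·(log α)⁴ ≤ α for all
sufficiently large α (so if exp²(α) exists then so does the ω₂ bound). -/
theorem omega2_code_bound :
    (∃ C : ℕ, ∀ α : ℕ, 2 ≤ α →
      omega2 (exp2 (omega1 α * omega1 α)) ≤ (expIter 2 (4 * (log2 α) ^ 4)) ^ C + C) ∧
    (∃ N : ℕ, ∀ α : ℕ, N ≤ α → 4 * (log2 α) ^ 4 ≤ α) := by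
  refine ⟨⟨1, fun α _ => ?_⟩, ⟨2 ^ 20, fun α hα => four_mul_log2_pow_four_le hα⟩⟩
  rw [omega2_exp2_omega1_mul_self, pow_one]
  exact Nat.le_succ _
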